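/- arXiv:1703.07446 — 11 statements merged into one kernel-verified Lean document; each statement's English description precedes it below -/
import Mathlib

section
/- Let n ≥ 2, let Ω ⊆ ℝⁿ be open, and let a : [0,∞) → ℝ be continuously differentiable on [0,∞) with a(t) > 0 for t > 0. Assume there is a constant i_a > −1 such that t·a'(t) ≥ i_a·a(t) for all t > 0. Then there exists a constant C > 0, depending only on n and i_a, such that for every function u ∈ C³(Ω) and every point x ∈ Ω with ∇u(x) ≠ 0, the pointwise inequality (div(a(|∇u|)∇u))² ≥ Σ_{j=1}^n ∂_{x_j}( a(|∇u|)² u_{x_j} Δu ) − Σ_{i=1}^n ∂_{x_i}( a(|∇u|)² Σ_{j=1}^n u_{x_j} u_{x_i x_j} ) + C · a(|∇u|)² |∇²u|² holds at x. -/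
noncomputable section

open Finset

/-- The `i`-th standard basis vector of `ℝⁿ`. -/
def stdBasis (n : ℕ) (i : Fin n) : EuclideanSpace ℝ (Fin n) :=
  EuclideanSpace.single i 1

/-- The `i`-th partial derivative of `f` at `x`. -/
def pd {n : ℕ} (f : EuclideanSpace ℝ (Fin n) → ℝ) (i : Fin n)
    (x : EuclideanSpace ℝ (Fin n)) : ℝ :=
  fderiv ℝ f x (stdBasis n i)

/-- The Euclidean norm of the gradient of `u` at `x`. -/
def gradNorm {n : ℕ} (u : EuclideanSpace ℝ (Fin n) → ℝ)
    (x : EuclideanSpace ℝ (Fin n)) : ℝ :=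
  Real.sqrt (∑ j, (pd u j x) ^ 2)

/-- The `(i,j)` entry `u_{x_i x_j}` of the Hessian of `u` at `x`. -/
def hess {n : ℕ} (u : EuclideanSpace ℝ (Fin n) → ℝ) (i j : Fin n)
    (x : EuclideanSpace ℝ (Fin n)) : ℝ :=
  pd (pd u j) i x

/-- The Laplacian of `u` at `x`. -/
def lap {n : ℕ} (u : EuclideanSpace ℝ (Fin n) → ℝ)
    (x : EuclideanSpace ℝ (Fin n)) : ℝ :=
  ∑ i, hess u i i x

/-!
Write `p = ∇u(x)`, `H = ∇²u(x)`, `s = |p|`, `w = H p`, `A = a(s)` and `ℓ = a'(s) / s`. By the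
product and chain rules (with `∂ᵢ|∇u| = wᵢ / s`), the three divergences at `x` are
`A Δu + ℓ p·w`, `A² (Δu² + p·∇Δu) + 2Aℓ (p·w) Δu` and `A² (|H|² + p·∇Δu) + 2Aℓ |w|²`; the
third-order terms `p·∇Δu` cancel because third derivatives commute, and the claim becomes
`C A² |H|² ≤ ℓ² (p·w)² + 2Aℓ |w|² + A² |H|²`.
Besides `(p·w)² ≤ s² |w|²`, the Hessian satisfies `2 s² |w|² - (p·w)² ≤ s⁴ |H|²` (Cauchy–Schwarz
on the rows of `s² H - p wᵀ`). For `ℓ ≥ 0` the claim is clear with `C ≤ 1`; for `ℓ < 0` these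
two bounds give the lower bound `(A + s² ℓ)² |H|²`, and `s² ℓ = s a'(s) ≥ i_a A` makes this at
least `(1 + i_a)² A² |H|²`. Hence `C = min 1 (1 + i_a)²`.
-/
section PartialDerivatives

variable {n : ℕ} {f g : EuclideanSpace ℝ (Fin n) → ℝ} {x : EuclideanSpace ℝ (Fin n)}

theorem Filter.EventuallyEq.pd_eq (h : f =ᶠ[nhds x] g) (j : Fin n) : pd f j x = pd g j x := by
  rw [pd, pd, h.fderiv_eq]

theorem pd_mul (hf : DifferentiableAt ℝ f x) (hg : DifferentiableAt ℝ g x) (j : Fin n) :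
    pd (fun y => f y * g y) j x = f x * pd g j x + g x * pd f j x := by
  simp [pd, fderiv_fun_mul hf hg]

theorem pd_sum {ι : Type*} {s : Finset ι} {F : ι → EuclideanSpace ℝ (Fin n) → ℝ}
    (hF : ∀ i ∈ s, DifferentiableAt ℝ (F i) x) (j : Fin n) :
    pd (fun y => ∑ i ∈ s, F i y) j x = ∑ i ∈ s, pd (F i) j x := by
  simp [pd, fderiv_fun_sum hF]

theorem pd_comp {φ : ℝ → ℝ} {φ' : ℝ} (hφ : HasDerivAt φ φ' (f x)) (hf : DifferentiableAt ℝ f x)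
    (j : Fin n) : pd (fun y => φ (f y)) j x = φ' * pd f j x := by
  rw [pd, show (fun y => φ (f y)) = φ ∘ f from rfl,
    (hφ.comp_hasFDerivAt x hf.hasFDerivAt).fderiv]
  simp [pd]

theorem pd_sq (hf : DifferentiableAt ℝ f x) (j : Fin n) :
    pd (fun y => f y ^ 2) j x = 2 * f x * pd f j x := by
  simpa using pd_comp (hasDerivAt_pow 2 (f x)) hf j

theorem ContDiffAt.pd {m : WithTop ℕ∞} (hf : ContDiffAt ℝ (m + 1) f x) (j : Fin n) :
    ContDiffAt ℝ m (pd f j) x :=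
  (hf.fderiv_right le_rfl).clm_apply contDiffAt_const

theorem pd_pd_comm (hf : ContDiffAt ℝ 2 f x) (i j : Fin n) :
    pd (pd f j) i x = pd (pd f i) j x := by
  have hd : DifferentiableAt ℝ (fderiv ℝ f) x :=
    (hf.fderiv_right (m := 1) le_rfl).differentiableAt one_ne_zero
  have h₂ : ∀ i j, pd (pd f j) i x = fderiv ℝ (fderiv ℝ f) x (stdBasis n i) (stdBasis n j) :=
    fun i j => by
      rw [pd, show pd f j = fun y => fderiv ℝ f y (stdBasis n j) from rfl,
        (hd.hasFDerivAt.clm_apply (hasFDerivAt_const (stdBasis n j) x)).fderiv]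
      simp
  rw [h₂, h₂, hf.isSymmSndFDerivAt (by simp [minSmoothness_of_isRCLikeNormedField])]

end PartialDerivatives

section GradientCalculus

variable {n : ℕ} {u : EuclideanSpace ℝ (Fin n) → ℝ} {x : EuclideanSpace ℝ (Fin n)}

theorem differentiableAt_pd (hu : ContDiffAt ℝ 2 u x) (j : Fin n) :
    DifferentiableAt ℝ (pd u j) x :=
  (hu.pd j).differentiableAt one_ne_zero

theorem differentiableAt_hess (hu : ContDiffAt ℝ 3 u x) (i j : Fin n) :
    DifferentiableAt ℝ (hess u i j) x :=
  differentiableAt_pd (hu.pd j) i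

theorem hess_comm (hu : ContDiffAt ℝ 2 u x) (i j : Fin n) : hess u i j x = hess u j i x :=
  pd_pd_comm hu i j

theorem pd_lap (hu : ContDiffAt ℝ 3 u x) (j : Fin n) :
    pd (lap u) j x = ∑ i, pd (hess u i j) i x := by
  have hu2 : ∀ᶠ y in nhds x, ContDiffAt ℝ 2 u y :=
    (hu.eventually (by simp)).mono fun y hy => hy.of_le (by norm_num)
  rw [show lap u = fun y => ∑ i, hess u i i y from rfl,
    pd_sum fun i _ => differentiableAt_hess hu i i]
  refine Finset.sum_congr rfl fun i _ => ?_
  calc pd (hess u i i) j x = pd (hess u j i) i x := pd_pd_comm (hu.pd i) j i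
    _ = pd (hess u i j) i x :=
      Filter.EventuallyEq.pd_eq (hu2.mono fun y hy => hess_comm hy j i) i

theorem sq_gradNorm (u : EuclideanSpace ℝ (Fin n) → ℝ) (x : EuclideanSpace ℝ (Fin n)) :
    gradNorm u x ^ 2 = ∑ j, pd u j x ^ 2 :=
  Real.sq_sqrt (Finset.sum_nonneg fun _ _ => sq_nonneg _)

theorem sum_sq_pd_ne_zero (hs : gradNorm u x ≠ 0) : ∑ j, pd u j x ^ 2 ≠ 0 := by
  rw [← sq_gradNorm]
  exact pow_ne_zero 2 hs

theorem pd_gradNorm (hu : ContDiffAt ℝ 2 u x) (hs : gradNorm u x ≠ 0) (i : Fin n) :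
    pd (gradNorm u) i x = (∑ k, pd u k x * hess u i k x) / gradNorm u x := by
  have hdS : DifferentiableAt ℝ (fun y => ∑ j, pd u j y ^ 2) x :=
    .fun_sum fun j _ => (differentiableAt_pd hu j).pow 2
  change pd (fun y => Real.sqrt (∑ j, pd u j y ^ 2)) i x = _
  rw [pd_comp (Real.hasDerivAt_sqrt (sum_sq_pd_ne_zero hs)) hdS,
    pd_sum (F := fun j y => pd u j y ^ 2) fun j _ => (differentiableAt_pd hu j).pow 2]
  simp only [pd_sq (differentiableAt_pd hu _), mul_assoc, ← Finset.mul_sum]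
  change 1 / (2 * gradNorm u x) * (2 * ∑ k, pd u k x * hess u i k x) = _
  field_simp

theorem differentiableAt_gradNorm (hu : ContDiffAt ℝ 2 u x) (hs : gradNorm u x ≠ 0) :
    DifferentiableAt ℝ (gradNorm u) x := by
  exact (Real.hasDerivAt_sqrt (sum_sq_pd_ne_zero hs)).differentiableAt.comp x
    (.fun_sum fun j _ => (differentiableAt_pd hu j).pow 2)

variable {ψ : ℝ → ℝ} {ψ' : ℝ}

theorem pd_comp_gradNorm (hu : ContDiffAt ℝ 2 u x) (hs : gradNorm u x ≠ 0)
    (hψ : HasDerivAt ψ ψ' (gradNorm u x)) (i : Fin n) :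
    pd (fun y => ψ (gradNorm u y)) i x = ψ' / gradNorm u x * ∑ k, pd u k x * hess u i k x := by
  rw [pd_comp hψ (differentiableAt_gradNorm hu hs), pd_gradNorm hu hs]
  ring

theorem sum_pd_comp_gradNorm_mul_pd (hu : ContDiffAt ℝ 2 u x) (hs : gradNorm u x ≠ 0)
    (hψ : HasDerivAt ψ ψ' (gradNorm u x)) :
    ∑ j, pd (fun y => ψ (gradNorm u y) * pd u j y) j x =
      ψ (gradNorm u x) * lap u x +
        ψ' / gradNorm u x * ∑ j, pd u j x * ∑ k, pd u k x * hess u j k x := by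
  have hψu : DifferentiableAt ℝ (fun y => ψ (gradNorm u y)) x :=
    hψ.differentiableAt.comp x (differentiableAt_gradNorm hu hs)
  simp only [pd_mul hψu (differentiableAt_pd hu _), pd_comp_gradNorm hu hs hψ,
    Finset.sum_add_distrib, ← Finset.mul_sum]
  congr 1
  rw [Finset.mul_sum]
  exact Finset.sum_congr rfl fun j _ => by ring

theorem sum_pd_hess_grad (hu : ContDiffAt ℝ 3 u x) :
    ∑ i, pd (fun y => ∑ j, pd u j y * hess u i j y) i x =
      ∑ i, ∑ j, hess u i j x ^ 2 + ∑ j, pd u j x * pd (lap u) j x := by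
  have hu2 : ContDiffAt ℝ 2 u x := hu.of_le (by norm_num)
  have hdiv : ∀ i, pd (fun y => ∑ j, pd u j y * hess u i j y) i x =
      ∑ j, (hess u i j x ^ 2 + pd u j x * pd (hess u i j) i x) := fun i => by
    rw [pd_sum fun j _ => (differentiableAt_pd hu2 j).fun_mul (differentiableAt_hess hu i j)]
    refine Finset.sum_congr rfl fun j _ => ?_
    rw [pd_mul (differentiableAt_pd hu2 j) (differentiableAt_hess hu i j),
      show pd (pd u j) i x = hess u i j x from rfl]
    ring
  simp only [hdiv, Finset.sum_add_distrib, pd_lap hu, Finset.mul_sum]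
  rw [Finset.sum_comm (f := fun i j => pd u j x * pd (hess u i j) i x)]

theorem sum_pd_comp_gradNorm_mul_pd_mul_lap (hu : ContDiffAt ℝ 3 u x) (hs : gradNorm u x ≠ 0)
    (hψ : HasDerivAt ψ ψ' (gradNorm u x)) :
    ∑ j, pd (fun y => ψ (gradNorm u y) * pd u j y * lap u y) j x =
      ψ (gradNorm u x) * (lap u x ^ 2 + ∑ j, pd u j x * pd (lap u) j x) +
        ψ' / gradNorm u x * (∑ j, pd u j x * ∑ k, pd u k x * hess u j k x) * lap u x := by
  have hu2 : ContDiffAt ℝ 2 u x := hu.of_le (by norm_num)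
  have hψu : DifferentiableAt ℝ (fun y => ψ (gradNorm u y)) x :=
    hψ.differentiableAt.comp x (differentiableAt_gradNorm hu2 hs)
  have hlap : DifferentiableAt ℝ (lap u) x := .fun_sum fun i _ => differentiableAt_hess hu i i
  simp only [pd_mul (hψu.fun_mul (differentiableAt_pd hu2 _)) hlap, Finset.sum_add_distrib,
    ← Finset.mul_sum, sum_pd_comp_gradNorm_mul_pd hu2 hs hψ]
  simp only [mul_assoc, ← Finset.mul_sum]
  ring

theorem sum_pd_comp_gradNorm_mul_hess_grad (hu : ContDiffAt ℝ 3 u x) (hs : gradNorm u x ≠ 0)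
    (hψ : HasDerivAt ψ ψ' (gradNorm u x)) :
    ∑ i, pd (fun y => ψ (gradNorm u y) * ∑ j, pd u j y * hess u i j y) i x =
      ψ (gradNorm u x) * (∑ i, ∑ j, hess u i j x ^ 2 + ∑ j, pd u j x * pd (lap u) j x) +
        ψ' / gradNorm u x * ∑ i, (∑ k, pd u k x * hess u i k x) ^ 2 := by
  have hu2 : ContDiffAt ℝ 2 u x := hu.of_le (by norm_num)
  have hψu : DifferentiableAt ℝ (fun y => ψ (gradNorm u y)) x :=
    hψ.differentiableAt.comp x (differentiableAt_gradNorm hu2 hs)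
  have hw : ∀ i, DifferentiableAt ℝ (fun y => ∑ j, pd u j y * hess u i j y) x := fun i =>
    .fun_sum fun j _ => (differentiableAt_pd hu2 j).fun_mul (differentiableAt_hess hu i j)
  simp only [pd_mul hψu (hw _), pd_comp_gradNorm hu2 hs hψ, Finset.sum_add_distrib,
    ← Finset.mul_sum, sum_pd_hess_grad hu]
  congr 1
  rw [Finset.mul_sum]
  exact Finset.sum_congr rfl fun i _ => by ring

end GradientCalculus

theorem two_mul_sum_sq_sub_sq_le {ι : Type*} [Fintype ι] (p w : ι → ℝ) (H : ι → ι → ℝ)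
    (hH : ∀ i j, H i j = H j i) (hw : ∀ i, w i = ∑ j, p j * H i j) :
    2 * (∑ i, p i ^ 2) * ∑ i, w i ^ 2 - (∑ i, p i * w i) ^ 2 ≤
      (∑ i, p i ^ 2) ^ 2 * ∑ i, ∑ j, H i j ^ 2 := by
  set S := ∑ i, p i ^ 2
  set q := ∑ i, p i * w i
  set b := ∑ i, w i ^ 2
  set h := ∑ i, ∑ j, H i j ^ 2
  have hpHw : ∑ i, ∑ j, p i * H i j * w j = b := by
    rw [Finset.sum_comm]
    refine Finset.sum_congr rfl fun j _ => ?_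
    rw [sq, hw j, Finset.mul_sum]
    exact Finset.sum_congr rfl fun i _ => by rw [hH]; ring
  -- Cauchy–Schwarz on the rows of `N = S H - p wᵀ`, for which `N p = S w - q p`.
  have hNp : ∀ i, ∑ j, (S * H i j - p i * w j) * p j = S * w i - q * p i := by
    intro i
    have hq : q = ∑ j, p j * w j := Finset.sum_congr rfl fun j _ => by ring
    rw [hw i, hq, Finset.mul_sum, Finset.sum_mul, ← Finset.sum_sub_distrib]
    exact Finset.sum_congr rfl fun j _ => by ring
  have hrow : ∀ i, (S * w i - q * p i) ^ 2 ≤ (∑ j, (S * H i j - p i * w j) ^ 2) * S := by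
    intro i
    rw [← hNp i]
    exact Finset.sum_mul_sq_le_sq_mul_sq _ _ _
  have hN : ∑ i, ∑ j, (S * H i j - p i * w j) ^ 2 = S * (S * h - b) := by
    calc ∑ i, ∑ j, (S * H i j - p i * w j) ^ 2
        = ∑ i, ∑ j, (S ^ 2 * H i j ^ 2 - 2 * S * (p i * H i j * w j) + p i ^ 2 * w j ^ 2) :=
          Finset.sum_congr rfl fun i _ => Finset.sum_congr rfl fun j _ => by ring
      _ = S * (S * h - b) := by
          simp only [Finset.sum_add_distrib, Finset.sum_sub_distrib, ← Finset.mul_sum,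
            ← Finset.sum_mul, hpHw]
          ring
  have hNp_sq : ∑ i, (S * w i - q * p i) ^ 2 = S * (S * b - q ^ 2) := by
    calc ∑ i, (S * w i - q * p i) ^ 2
        = ∑ i, (S ^ 2 * w i ^ 2 - 2 * S * q * (p i * w i) + q ^ 2 * p i ^ 2) :=
          Finset.sum_congr rfl fun i _ => by ring
      _ = S * (S * b - q ^ 2) := by
          simp only [Finset.sum_add_distrib, Finset.sum_sub_distrib, ← Finset.mul_sum]
          ring
  have hsum := Finset.sum_le_sum fun i (_ : i ∈ univ) => hrow i
  rw [← Finset.sum_mul, hN, hNp_sq] at hsum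
  rcases (show 0 ≤ S from Finset.sum_nonneg fun i _ => sq_nonneg (p i)).eq_or_lt with hS | hS
  · rw [← hS]
    nlinarith [sq_nonneg q]
  · nlinarith

theorem min_one_sq_mul_le {i_a A σ t β h : ℝ} (hia : -1 < i_a) (hA : 0 < A)
    (hσ : i_a * A ≤ σ) (htβ : t ^ 2 ≤ β) (hβh : 2 * β - t ^ 2 ≤ h) :
    min 1 ((1 + i_a) ^ 2) * A ^ 2 * h ≤ σ ^ 2 * t ^ 2 + 2 * A * σ * β + A ^ 2 * h := by
  have hth : t ^ 2 ≤ h := by linarith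
  have hh : 0 ≤ h := (sq_nonneg t).trans hth
  have hA2h : 0 ≤ A ^ 2 * h := by positivity
  rcases le_or_gt 0 σ with hσ0 | hσ0
  · have hβ : 0 ≤ β := (sq_nonneg t).trans htβ
    calc min 1 ((1 + i_a) ^ 2) * A ^ 2 * h
        ≤ 1 * (A ^ 2 * h) := by
          rw [mul_assoc]; exact mul_le_mul_of_nonneg_right (min_le_left _ _) hA2h
      _ ≤ σ ^ 2 * t ^ 2 + 2 * A * σ * β + A ^ 2 * h := by
          nlinarith [sq_nonneg (σ * t), mul_nonneg (mul_nonneg hA.le hσ0) hβ]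
  · have hAσ : 0 ≤ (1 + i_a) * A ∧ (1 + i_a) * A ≤ A + σ := ⟨by nlinarith, by linarith⟩
    calc min 1 ((1 + i_a) ^ 2) * A ^ 2 * h
        ≤ ((1 + i_a) * A) ^ 2 * h := by
          rw [mul_assoc, mul_pow, mul_assoc]
          exact mul_le_mul_of_nonneg_right (min_le_right _ _) hA2h
      _ ≤ (A + σ) ^ 2 * h := mul_le_mul_of_nonneg_right (pow_le_pow_left₀ hAσ.1 hAσ.2 2) hh
      _ ≤ A * (A + σ) * h + σ * (A + σ) * t ^ 2 := by
          nlinarith [mul_nonneg (mul_nonneg (neg_nonneg.2 hσ0.le) (hAσ.1.trans hAσ.2))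
            (sub_nonneg.2 hth)]
      _ ≤ σ ^ 2 * t ^ 2 + 2 * A * σ * β + A ^ 2 * h := by
          nlinarith [mul_nonneg (mul_nonneg hA.le (neg_nonneg.2 hσ0.le)) (sub_nonneg.2 hβh)]

theorem min_one_sq_mul_le_of_homogeneous {i_a A ℓ S q b h : ℝ} (hia : -1 < i_a) (hA : 0 < A)
    (hS : 0 < S) (hℓ : i_a * A ≤ S * ℓ) (hqb : q ^ 2 ≤ S * b)
    (hbh : 2 * S * b - q ^ 2 ≤ S ^ 2 * h) :
    min 1 ((1 + i_a) ^ 2) * A ^ 2 * h ≤ ℓ ^ 2 * q ^ 2 + 2 * A * ℓ * b + A ^ 2 * h := by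
  have key := min_one_sq_mul_le (t := q / S) (β := b / S) (h := h) hia hA hℓ
    (by rw [div_pow, div_le_div_iff₀ (by positivity) hS]; nlinarith)
    (by rw [div_pow, ← sub_nonneg]; field_simp; nlinarith)
  convert key using 2
  field_simp

theorem pointwise_differential_inequality_general
    (n : ℕ) (i_a : ℝ) (hia : -1 < i_a) :
    ∃ C : ℝ, 0 < C ∧
      ∀ a : ℝ → ℝ, ContDiffOn ℝ 1 a (Set.Ici 0) → (∀ t : ℝ, 0 < t → 0 < a t) →
        (∀ t : ℝ, 0 < t → i_a * a t ≤ t * deriv a t) →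
      ∀ Ω : Set (EuclideanSpace ℝ (Fin n)), IsOpen Ω →
      ∀ u : EuclideanSpace ℝ (Fin n) → ℝ, ContDiffOn ℝ 3 u Ω →
      ∀ x ∈ Ω, (fun j => pd u j x) ≠ 0 →
        (∑ j, pd (fun y => a (gradNorm u y) * pd u j y) j x) ^ 2 ≥
          (∑ j, pd (fun y => (a (gradNorm u y)) ^ 2 * pd u j y * lap u y) j x)
          - (∑ i, pd (fun y => (a (gradNorm u y)) ^ 2 * ∑ j, pd u j y * hess u i j y) i x)
          + C * (a (gradNorm u x)) ^ 2 * ∑ i, ∑ j, (hess u i j x) ^ 2 := by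
  refine ⟨min 1 ((1 + i_a) ^ 2), lt_min one_pos (pow_pos (by linarith) 2), ?_⟩
  intro a ha ha_pos ha_index Ω hΩ u hu x hx hp
  have hu3 : ContDiffAt ℝ 3 u x := hu.contDiffAt (hΩ.mem_nhds hx)
  have hu2 : ContDiffAt ℝ 2 u x := hu3.of_le (by norm_num)
  have hS : 0 < ∑ j, pd u j x ^ 2 := by
    obtain ⟨j, hj⟩ := Function.ne_iff.mp hp
    exact Finset.sum_pos' (fun _ _ => sq_nonneg _) ⟨j, Finset.mem_univ _, sq_pos_of_ne_zero hj⟩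
  have hs : 0 < gradNorm u x := Real.sqrt_pos.2 hS
  have hA : HasDerivAt a (deriv a (gradNorm u x)) (gradNorm u x) :=
    ((ha.contDiffAt (Ici_mem_nhds hs)).differentiableAt one_ne_zero).hasDerivAt
  have hA2 : HasDerivAt (fun t => a t ^ 2)
      (2 * a (gradNorm u x) * deriv a (gradNorm u x)) (gradNorm u x) := by
    simpa using hA.fun_pow 2
  rw [sum_pd_comp_gradNorm_mul_pd hu2 hs.ne' hA,
    sum_pd_comp_gradNorm_mul_pd_mul_lap (ψ := fun t => a t ^ 2) hu3 hs.ne' hA2,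
    sum_pd_comp_gradNorm_mul_hess_grad (ψ := fun t => a t ^ 2) hu3 hs.ne' hA2]
  have hℓ : i_a * a (gradNorm u x) ≤
      (∑ j, pd u j x ^ 2) * (deriv a (gradNorm u x) / gradNorm u x) := by
    rw [← sq_gradNorm, sq, mul_assoc, mul_div_cancel₀ _ hs.ne']
    exact ha_index _ hs
  have key := min_one_sq_mul_le_of_homogeneous hia (ha_pos _ hs) hS hℓ
    (Finset.sum_mul_sq_le_sq_mul_sq _ _ _)
    (two_mul_sum_sq_sub_sq_le _ _ _ (hess_comm hu2) fun i => rfl)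
  linear_combination key

/-- The pointwise differential inequality
`(div(a(|∇u|)∇u))² ≥ ∑ⱼ ∂ⱼ(a(|∇u|)² u_{xⱼ} Δu) − ∑ᵢ ∂ᵢ(a(|∇u|)² ∑ⱼ u_{xⱼ} u_{xᵢxⱼ})
  + C a(|∇u|)² |∇²u|²`
with a constant `C > 0` depending only on `n` and `i_a`. -/
theorem pointwise_differential_inequality
    (n : ℕ) (hn : 2 ≤ n) (i_a : ℝ) (hia : -1 < i_a) :
    ∃ C : ℝ, 0 < C ∧
      ∀ a : ℝ → ℝ, ContDiffOn ℝ 1 a (Set.Ici 0) → (∀ t : ℝ, 0 < t → 0 < a t) →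
        (∀ t : ℝ, 0 < t → i_a * a t ≤ t * deriv a t) →
      ∀ Ω : Set (EuclideanSpace ℝ (Fin n)), IsOpen Ω →
      ∀ u : EuclideanSpace ℝ (Fin n) → ℝ, ContDiffOn ℝ 3 u Ω →
      ∀ x ∈ Ω, (fun j => pd u j x) ≠ 0 →
        (∑ j, pd (fun y => a (gradNorm u y) * pd u j y) j x) ^ 2 ≥
          (∑ j, pd (fun y => (a (gradNorm u y)) ^ 2 * pd u j y * lap u y) j x)
          - (∑ i, pd (fun y => (a (gradNorm u y)) ^ 2 * ∑ j, pd u j y * hess u i j y) i x)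
          + C * (a (gradNorm u x)) ^ 2 * ∑ i, ∑ j, (hess u i j x) ^ 2 :=
  pointwise_differential_inequality_general n i_a hia
end
end

section
/- Let n ≥ 1 and let i_a > −1 be a real number. Then there exists a constant C > 0, depending only on n and i_a, such that for every real ϑ ≥ i_a, every ω ∈ ℝⁿ with |ω| = 1, and every real symmetric n×n matrix H, the inequality ϑ² ⟨Hω, ω⟩² + 2ϑ ⟨Hω, Hω⟩ + tr(H²) ≥ C tr(H²) holds. -/
open Finset

private theorem key_ineq_aux (n : ℕ) (ω u : Fin n → ℝ) (H : Matrix (Fin n) (Fin n) ℝ)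
    (hsymm : ∀ i j, H j i = H i j)
    (hui : ∀ i, u i = ∑ j, H i j * ω j)
    (hω : ∑ i, (ω i) ^ 2 = 1) (a b : ℝ)
    (ha : a = ∑ i, u i * ω i) (hb : b = ∑ i, (u i)^2) :
    2*b - a^2 ≤ ∑ i, ∑ j, H i j ^ 2 := by
  set w : Fin n → ℝ := fun i => ∑ j, H i j * u j with hw
  have hwb : ∑ i, ω i * w i = b := by
    simp only [hw, Finset.mul_sum]
    rw [Finset.sum_comm, hb]
    refine Finset.sum_congr rfl fun j _ => ?_
    have : ∑ i, ω i * (H i j * u j) = (∑ i, H j i * ω i) * u j := by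
      rw [Finset.sum_mul]
      exact Finset.sum_congr rfl fun i _ => by rw [hsymm]; ring
    rw [this, ← hui]; ring
  have inner : ∀ i, ∑ j, (H i j - u i * ω j - ω i * u j + a * ω i * ω j)^2
      = (∑ j, H i j ^ 2) - 2*(u i)*(u i) - 2*(ω i)*(w i) + 2*(a*ω i)*(u i)
        + (u i)^2*1 + (ω i)^2*b + (a^2*(ω i)^2)*1 + 2*(u i*ω i)*a
        - 2*(a*u i*ω i)*1 - 2*(a*(ω i)^2)*a := by
    intro i
    have e1 : ∀ j, (H i j - u i * ω j - ω i * u j + a * ω i * ω j)^2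
        = H i j ^ 2 - 2*(u i)*(H i j * ω j) - 2*(ω i)*(H i j * u j) + 2*(a*ω i)*(H i j * ω j)
          + (u i)^2*(ω j)^2 + (ω i)^2*(u j)^2 + (a^2*(ω i)^2)*(ω j)^2 + 2*(u i*ω i)*(u j * ω j)
          - 2*(a*u i*ω i)*(ω j)^2 - 2*(a*(ω i)^2)*(u j * ω j) := fun j => by ring
    rw [Finset.sum_congr rfl fun j _ => e1 j]
    simp only [Finset.sum_add_distrib, Finset.sum_sub_distrib, ← Finset.mul_sum]
    rw [← hui, hω, ← hb, ← ha]
  have h0 : (0:ℝ) ≤ ∑ i, ∑ j, (H i j - u i * ω j - ω i * u j + a * ω i * ω j)^2 := by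
    positivity
  rw [Finset.sum_congr rfl fun i _ => inner i] at h0
  simp only [Finset.sum_add_distrib, Finset.sum_sub_distrib] at h0
  have s1 : ∑ x, 2*(u x)*(u x) = 2*b := by
    rw [hb, Finset.mul_sum]; exact Finset.sum_congr rfl fun x _ => by ring
  have s2 : ∑ x, 2*(ω x)*(w x) = 2*b := by
    rw [← hwb, Finset.mul_sum]; exact Finset.sum_congr rfl fun x _ => by ring
  have s3 : ∑ x, 2*(a*ω x)*(u x) = 2*a*a := by
    rw [show (2*a*a : ℝ) = 2*a*(∑ i, u i * ω i) by rw [← ha], Finset.mul_sum]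
    exact Finset.sum_congr rfl fun x _ => by ring
  have s4 : ∑ x, (u x)^2*1 = b := by rw [hb]; exact Finset.sum_congr rfl fun x _ => by ring
  have s5 : ∑ x, (ω x)^2*b = b := by rw [← Finset.sum_mul, hω, one_mul]
  have s6 : ∑ x, (a^2*(ω x)^2)*1 = a^2 := by
    have : ∑ x, (a^2*(ω x)^2)*1 = a^2 * ∑ x, (ω x)^2 := by
      rw [Finset.mul_sum]; exact Finset.sum_congr rfl fun x _ => by ring
    rw [this, hω, mul_one]
  have s7 : ∑ x, 2*(u x*ω x)*a = 2*a*a := by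
    rw [show (2*a*a : ℝ) = 2*a*(∑ i, u i * ω i) by rw [← ha], Finset.mul_sum]
    exact Finset.sum_congr rfl fun x _ => by ring
  have s8 : ∑ x, 2*(a*u x*ω x)*1 = 2*a*a := by
    rw [show (2*a*a : ℝ) = 2*a*(∑ i, u i * ω i) by rw [← ha], Finset.mul_sum]
    exact Finset.sum_congr rfl fun x _ => by ring
  have s9 : ∑ x, 2*(a*(ω x)^2)*a = 2*a*a := by
    have : ∑ x, 2*(a*(ω x)^2)*a = (2*a*a) * ∑ x, (ω x)^2 := by
      rw [Finset.mul_sum]; exact Finset.sum_congr rfl fun x _ => by ring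
    rw [this, hω, mul_one]
  rw [s1, s2, s3, s4, s5, s6, s7, s8, s9] at h0
  nlinarith [h0]

/-- There is a constant `C > 0`, depending only on `n` and `i_a > -1`, such
that `ϑ² ⟨Hω,ω⟩² + 2ϑ ⟨Hω,Hω⟩ + tr(H²) ≥ C tr(H²)` for every `ϑ ≥ i_a`, every unit vector
`ω ∈ ℝⁿ`, and every real symmetric `n×n` matrix `H`. -/
theorem quadratic_form_lower_bound (n : ℕ) (hn : 1 ≤ n) (i_a : ℝ) (hia : -1 < i_a) :
    ∃ C : ℝ, 0 < C ∧
      ∀ ϑ : ℝ, i_a ≤ ϑ →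
      ∀ ω : Fin n → ℝ, ∑ i, (ω i) ^ 2 = 1 →
      ∀ H : Matrix (Fin n) (Fin n) ℝ, H.IsSymm →
        ϑ ^ 2 * (∑ i, H.mulVec ω i * ω i) ^ 2 + 2 * ϑ * (∑ i, (H.mulVec ω i) ^ 2)
            + (H * H).trace
          ≥ C * (H * H).trace := by
  set ε : ℝ := i_a + 1 with hεdef
  have hεpos : 0 < ε := by simp [hεdef]; linarith
  set C : ℝ := min 1 (min ε (ε^2)) with hCdef
  have hC1 : C ≤ 1 := min_le_left _ _
  have hC2 : C ≤ ε := le_trans (min_le_right _ _) (min_le_left _ _)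
  have hC3 : C ≤ ε^2 := le_trans (min_le_right _ _) (min_le_right _ _)
  refine ⟨C, by positivity, ?_⟩
  intro ϑ hϑ ω hω H hH
  set u : Fin n → ℝ := H.mulVec ω with hu
  set a : ℝ := ∑ i, u i * ω i with ha
  set b : ℝ := ∑ i, (u i)^2 with hb
  have hui : ∀ i, u i = ∑ j, H i j * ω j := fun i => by
    simp [hu, Matrix.mulVec, dotProduct]
  have hsymm : ∀ i j, H j i = H i j := fun i j => hH.apply i j
  have htr : (H * H).trace = ∑ i, ∑ j, H i j ^ 2 := by
    simp only [Matrix.trace, Matrix.mul_apply, Matrix.diag]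
    exact Finset.sum_congr rfl fun i _ => Finset.sum_congr rfl fun j _ => by
      rw [hsymm]; ring
  have hkey : 2*b - a^2 ≤ (H * H).trace := by
    rw [htr]; exact key_ineq_aux n ω u H hsymm hui hω a b ha hb
  have hCS : a^2 ≤ b := by
    have := Finset.sum_mul_sq_le_sq_mul_sq Finset.univ u ω
    rw [hω, mul_one] at this
    exact ha ▸ hb ▸ this
  have hϑ1 : ε ≤ ϑ + 1 := by simp [hεdef]; linarith
  have hsq : ε^2 ≤ (ϑ+1)^2 := by nlinarith
  have p1 : 0 ≤ ((ϑ+1)^2 - C) * a^2 := mul_nonneg (by linarith [hC3.trans hsq]) (sq_nonneg a)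
  have p2 : 0 ≤ ((ϑ+1) - C) * (b - a^2) := mul_nonneg (by linarith [hC2.trans hϑ1]) (by linarith)
  have p3 : 0 ≤ (1 - C) * ((H * H).trace - (2*b - a^2)) :=
    mul_nonneg (by linarith) (by linarith)
  nlinarith [p1, p2, p3]
end

section
/- For every real symmetric n×n matrix H and every vector ω ∈ ℝⁿ with |ω| = 1, the inequality ⟨Hω, ω⟩² − 2 ⟨Hω, Hω⟩ + tr(H²) ≥ 0 holds. -/
open Finset

/-- For every real symmetric `n×n` matrix `H` and every unit vector `ω`,
`⟨Hω,ω⟩² − 2⟨Hω,Hω⟩ + tr(H²) ≥ 0`. -/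
theorem symm_matrix_inequality (n : ℕ) (H : Matrix (Fin n) (Fin n) ℝ) (hH : H.IsSymm)
    (ω : Fin n → ℝ) (hω : ∑ i, (ω i) ^ 2 = 1) :
    (∑ i, H.mulVec ω i * ω i) ^ 2 - 2 * (∑ i, (H.mulVec ω i) ^ 2) + (H * H).trace ≥ 0 := by
  set u : Fin n → ℝ := H.mulVec ω with hu
  have hui : ∀ i, u i = ∑ j, H i j * ω j := fun i => by
    simp [hu, Matrix.mulVec, dotProduct]
  have hsymm : ∀ i j, H j i = H i j := fun i j => hH.apply i j
  set a : ℝ := ∑ i, u i * ω i with ha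
  set U : ℝ := ∑ i, u i ^ 2 with hU
  have htr : (H * H).trace = ∑ i, ∑ j, H i j ^ 2 := by
    simp only [Matrix.trace, Matrix.diag, Matrix.mul_apply]
    exact Finset.sum_congr rfl fun i _ => Finset.sum_congr rfl fun j _ => by
      rw [hsymm i j]; ring
  have hHuω : ∑ i, ω i * (∑ j, H i j * u j) = U := by
    simp only [Finset.mul_sum]
    rw [Finset.sum_comm]
    rw [hU]
    refine Finset.sum_congr rfl fun j _ => ?_
    have : ∑ i, ω i * (H i j * u j) = (∑ i, H j i * ω i) * u j := by
      rw [Finset.sum_mul]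
      exact Finset.sum_congr rfl fun i _ => by rw [hsymm i j]; ring
    rw [this, ← hui j]; ring
  have key : ∀ i, ∑ j, (H i j - u i * ω j - ω i * u j + a * (ω i * ω j)) ^ 2
      = (∑ j, H i j ^ 2) + u i ^ 2 * 1 + ω i ^ 2 * U + a ^ 2 * ω i ^ 2 * 1
        - 2 * u i * u i - 2 * ω i * (∑ j, H i j * u j) + 2 * (a * ω i) * u i
        + 2 * (u i * ω i) * a - 2 * (a * u i * ω i) * 1 - 2 * (a * ω i ^ 2) * a := by
    intro i
    have expand : ∀ j, (H i j - u i * ω j - ω i * u j + a * (ω i * ω j)) ^ 2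
        = H i j ^ 2 + u i ^ 2 * ω j ^ 2 + ω i ^ 2 * u j ^ 2 + a ^ 2 * ω i ^ 2 * ω j ^ 2
          - 2 * u i * (H i j * ω j) - 2 * ω i * (H i j * u j) + 2 * (a * ω i) * (H i j * ω j)
          + 2 * (u i * ω i) * (u j * ω j) - 2 * (a * u i * ω i) * ω j ^ 2
          - 2 * (a * ω i ^ 2) * (u j * ω j) := fun j => by ring
    rw [Finset.sum_congr rfl fun j _ => expand j]
    simp only [Finset.sum_add_distrib, Finset.sum_sub_distrib, ← Finset.mul_sum]
    rw [← hui i, hω, ← ha, ← hU]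
  have nonneg : (0:ℝ) ≤ ∑ i, ∑ j, (H i j - u i * ω j - ω i * u j + a * (ω i * ω j)) ^ 2 :=
    Finset.sum_nonneg fun i _ => Finset.sum_nonneg fun j _ => sq_nonneg _
  have total : ∑ i, ∑ j, (H i j - u i * ω j - ω i * u j + a * (ω i * ω j)) ^ 2
      = a ^ 2 - 2 * U + (H * H).trace := by
    rw [Finset.sum_congr rfl fun i _ => key i]
    simp only [Finset.sum_add_distrib, Finset.sum_sub_distrib, htr]
    have e1 : ∑ i, u i ^ 2 * 1 = U := by simp [hU]
    have e2 : ∑ i, ω i ^ 2 * U = U := by rw [← Finset.sum_mul, hω, one_mul]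
    have e3 : ∑ i, a ^ 2 * ω i ^ 2 * 1 = a ^ 2 := by
      simp only [mul_one, ← Finset.mul_sum]; rw [hω, mul_one]
    have e4 : ∑ i, 2 * u i * u i = 2 * U := by
      rw [hU, Finset.mul_sum]; exact Finset.sum_congr rfl fun i _ => by ring
    have e5 : ∑ i, 2 * ω i * (∑ j, H i j * u j) = 2 * U := by
      rw [← hHuω, Finset.mul_sum]
      exact Finset.sum_congr rfl fun i _ => by ring
    have e6 : ∑ i, 2 * (a * ω i) * u i = 2 * a * a := by
      have : ∑ i, 2 * (a * ω i) * u i = 2 * a * ∑ i, u i * ω i := by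
        rw [Finset.mul_sum]; exact Finset.sum_congr rfl fun i _ => by ring
      rw [this, ← ha]
    have e7 : ∑ i, 2 * (u i * ω i) * a = 2 * a * a := by
      have : ∑ i, 2 * (u i * ω i) * a = 2 * a * ∑ i, u i * ω i := by
        rw [Finset.mul_sum]; exact Finset.sum_congr rfl fun i _ => by ring
      rw [this, ← ha]
    have e8 : ∑ i, 2 * (a * u i * ω i) * 1 = 2 * a * a := by
      have : ∑ i, 2 * (a * u i * ω i) * 1 = 2 * a * ∑ i, u i * ω i := by
        rw [Finset.mul_sum]; exact Finset.sum_congr rfl fun i _ => by ring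
      rw [this, ← ha]
    have e9 : ∑ i, 2 * (a * ω i ^ 2) * a = 2 * a ^ 2 := by
      have : ∑ i, 2 * (a * ω i ^ 2) * a = 2 * a ^ 2 * ∑ i, ω i ^ 2 := by
        rw [Finset.mul_sum]; exact Finset.sum_congr rfl fun i _ => by ring
      rw [this, hω, mul_one]
    rw [e1, e2, e3, e4, e5, e6, e7, e8, e9]
    ring
  linarith [nonneg, total.le, total.ge]
end

section
/- Let n ≥ 1 and let η₁, …, ηₙ be real numbers with ηᵢ ≥ 0 for i = 1, …, n and Σ_{i=1}^n ηᵢ ≤ 1. Then for every choice of real numbers λ₁, …, λₙ, the inequality Σ_{i=1}^n (ηᵢ − 1)² λᵢ² + 2 Σ_{1 ≤ i < j ≤ n} ηᵢ ηⱼ λᵢ λⱼ ≥ 0 holds. -/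
open Finset

lemma sq_sum_aux {n : ℕ} (g : Fin n → ℝ) :
    (∑ i, g i) ^ 2 = ∑ i, g i ^ 2 + 2 * ∑ i, ∑ j ∈ Ioi i, g i * g j := by
  have h : ∑ i, ∑ j ∈ Ioi i, (g j * g i + g i * g j)
      = ∑ i, ∑ j ∈ ({i}ᶜ : Finset (Fin n)), g j * g i := by
    convert Finset.sum_sum_Ioi_add_eq_sum_sum_off_diag (fun i j : Fin n => g i * g j) using 2 with i
  have hL : ∑ i, ∑ j ∈ Ioi i, (g j * g i + g i * g j)
      = 2 * ∑ i, ∑ j ∈ Ioi i, g i * g j := by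
    rw [Finset.mul_sum]
    refine sum_congr rfl fun i _ => ?_
    rw [Finset.mul_sum]
    exact sum_congr rfl fun j _ => by ring
  have hcompl : ∀ i : Fin n, ∑ j ∈ ({i}ᶜ : Finset (Fin n)), g j = (∑ j, g j) - g i := by
    intro i
    have := Finset.sum_compl_add_sum ({i} : Finset (Fin n)) g
    simp at this
    linarith
  have hR : ∑ i, ∑ j ∈ ({i}ᶜ : Finset (Fin n)), g j * g i
      = (∑ i, g i) ^ 2 - ∑ i, g i ^ 2 := by
    have : ∀ i : Fin n, ∑ j ∈ ({i}ᶜ : Finset (Fin n)), g j * g i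
        = (∑ j, g j) * g i - g i ^ 2 := by
      intro i
      rw [← Finset.sum_mul, hcompl i]
      ring
    rw [sum_congr rfl fun i _ => this i, Finset.sum_sub_distrib, ← Finset.mul_sum]
    ring
  rw [hL] at h
  have key : (∑ i, g i) ^ 2 - ∑ i, g i ^ 2 = 2 * ∑ i, ∑ j ∈ Ioi i, g i * g j := by
    rw [← hR]; exact h.symm
  linarith


lemma quad_key {n : ℕ} (s : Finset (Fin n)) (η l : Fin n → ℝ)
    (hη : ∀ i ∈ s, 0 ≤ η i) (hsum : ∑ i ∈ s, η i ≤ 1) :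
    0 ≤ ∑ i ∈ s, (1 - 2 * η i) * l i ^ 2 + (∑ i ∈ s, η i * l i) ^ 2 := by
  by_cases hex : ∃ k ∈ s, 1 / 2 < η k
  · obtain ⟨k, hk, hk2⟩ := hex
    set a := η k with ha
    have hsplit : ∑ i ∈ s, η i = a + ∑ i ∈ s.erase k, η i :=
      (Finset.add_sum_erase s η hk).symm
    have hη' : ∀ i ∈ s.erase k, 0 ≤ η i := fun i hi => hη i (Finset.mem_of_mem_erase hi)
    have hT' : ∑ i ∈ s.erase k, η i ≤ 1 - a := by linarith
    have hT'0 : 0 ≤ ∑ i ∈ s.erase k, η i := Finset.sum_nonneg hη'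
    have ha1 : a ≤ 1 := by linarith
    have hsplit1 : ∑ i ∈ s, (1 - 2 * η i) * l i ^ 2
        = (1 - 2 * a) * l k ^ 2 + ∑ i ∈ s.erase k, (1 - 2 * η i) * l i ^ 2 :=
      (Finset.add_sum_erase s _ hk).symm
    have hsplit2 : ∑ i ∈ s, η i * l i
        = a * l k + ∑ i ∈ s.erase k, η i * l i :=
      (Finset.add_sum_erase s _ hk).symm
    set R := ∑ i ∈ s.erase k, η i * l i with hR
    set A := ∑ i ∈ s.erase k, η i * l i ^ 2 with hA
    have hA0 : 0 ≤ A := Finset.sum_nonneg fun i hi => mul_nonneg (hη' i hi) (sq_nonneg _)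
    rcases eq_or_lt_of_le ha1 with heq | hlt
    · -- a = 1 : all other η are zero
      have hsum0 : ∑ j ∈ s.erase k, η j = 0 := by
        apply le_antisymm _ hT'0
        rw [← heq] at hT'
        linarith
      have hz : ∀ i ∈ s.erase k, η i = 0 :=
        (Finset.sum_eq_zero_iff_of_nonneg hη').1 hsum0
      have hR0 : R = 0 := Finset.sum_eq_zero fun i hi => by rw [hz i hi]; ring
      have hS' : ∑ i ∈ s.erase k, (1 - 2 * η i) * l i ^ 2 = ∑ i ∈ s.erase k, l i ^ 2 :=
        Finset.sum_congr rfl fun i hi => by rw [hz i hi]; ring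
      rw [hsplit1, hsplit2, hR0, hS', ← heq]
      have : 0 ≤ ∑ i ∈ s.erase k, l i ^ 2 := Finset.sum_nonneg fun i _ => sq_nonneg _
      nlinarith [sq_nonneg (l k)]
    · -- 1/2 < a < 1
      have hbound : ∀ i ∈ s.erase k, η i ≤ 1 - a := by
        intro i hi
        have h2 := Finset.single_le_sum hη' hi
        linarith
      -- Cauchy-Schwarz : R^2 ≤ (∑ η) * A
      have hcs : R ^ 2 ≤ (∑ i ∈ s.erase k, η i) * A := by
        have := Finset.sum_mul_sq_le_sq_mul_sq (s.erase k)
          (fun i => Real.sqrt (η i)) (fun i => Real.sqrt (η i) * l i)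
        have e1 : ∑ i ∈ s.erase k, Real.sqrt (η i) * (Real.sqrt (η i) * l i) = R :=
          Finset.sum_congr rfl fun i hi => by
            rw [← mul_assoc, Real.mul_self_sqrt (hη' i hi)]
        have e2 : ∑ i ∈ s.erase k, Real.sqrt (η i) ^ 2 = ∑ i ∈ s.erase k, η i :=
          Finset.sum_congr rfl fun i hi => Real.sq_sqrt (hη' i hi)
        have e3 : ∑ i ∈ s.erase k, (Real.sqrt (η i) * l i) ^ 2 = A :=
          Finset.sum_congr rfl fun i hi => by
            rw [mul_pow, Real.sq_sqrt (hη' i hi)]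
        rwa [e1, e2, e3] at this
      have hcs' : R ^ 2 ≤ (1 - a) * A :=
        hcs.trans (mul_le_mul_of_nonneg_right hT' hA0)
      -- termwise bound : (2a-1) * A ≤ (1-a) * ∑ (1-2η) l²
      have hterm : (2 * a - 1) * A ≤ (1 - a) * ∑ i ∈ s.erase k, (1 - 2 * η i) * l i ^ 2 := by
        rw [hA, Finset.mul_sum, Finset.mul_sum]
        refine Finset.sum_le_sum fun i hi => ?_
        have h1 := hbound i hi
        have h2 := hη' i hi
        nlinarith [sq_nonneg (l i)]
      rw [hsplit1, hsplit2]
      nlinarith [sq_nonneg ((1 - a) ^ 2 * l k + a * R), sq_nonneg (a * l k + R),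
        mul_pos (sub_pos.2 hlt) (sub_pos.2 hlt)]
  · push_neg at hex
    have h1 : 0 ≤ ∑ i ∈ s, (1 - 2 * η i) * l i ^ 2 :=
      Finset.sum_nonneg fun i hi =>
        mul_nonneg (by linarith [hex i hi]) (sq_nonneg _)
    nlinarith [sq_nonneg (∑ i ∈ s, η i * l i)]


/-- **Lemma on a quadratic form.** If `ηᵢ ≥ 0` and `∑ ηᵢ ≤ 1`, then
`∑ᵢ (ηᵢ − 1)² λᵢ² + 2 ∑_{i<j} ηᵢηⱼ λᵢλⱼ ≥ 0` for all real `λᵢ`. -/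
theorem quadratic_form_nonneg (n : ℕ) (hn : 1 ≤ n) (η : Fin n → ℝ)
    (hη : ∀ i, 0 ≤ η i) (hsum : ∑ i, η i ≤ 1) (l : Fin n → ℝ) :
    0 ≤ ∑ i, (η i - 1) ^ 2 * (l i) ^ 2
        + 2 * ∑ i, ∑ j ∈ Finset.Ioi i, η i * η j * (l i * l j) := by
  have hg := sq_sum_aux (fun i => η i * l i)
  have h2 : ∑ i, ∑ j ∈ Ioi i, η i * η j * (l i * l j)
      = ∑ i, ∑ j ∈ Ioi i, (η i * l i) * (η j * l j) :=
    sum_congr rfl fun i _ => sum_congr rfl fun j _ => by ring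
  have h3 : ∑ i, (η i - 1) ^ 2 * (l i) ^ 2
      = ∑ i, (1 - 2 * η i) * l i ^ 2 + ∑ i, (η i * l i) ^ 2 := by
    rw [← Finset.sum_add_distrib]
    exact sum_congr rfl fun i _ => by ring
  have hkey := quad_key Finset.univ η l (fun i _ => hη i) hsum
  rw [h2, h3]
  linarith [hg, hkey]
end

section
/- Let n ≥ 1 and let η₁, …, ηₙ be real numbers. Let M(η) be the real n×n matrix with diagonal entries M_{ii} = (ηᵢ − 1)² and off-diagonal entries M_{ij} = ηᵢηⱼ for i ≠ j. Then det M(η) = Σ_{i=1}^n ηᵢ² Π_{j ≠ i} (1 − 2ηⱼ) + Π_{j=1}^n (1 − 2ηⱼ). -/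
/-!
Off the diagonal `M(η)ᵢⱼ = ηᵢηⱼ`, and on it `(ηᵢ - 1)² = ηᵢ² + (1 - 2ηᵢ)`, so
`M(η) = diag(1 - 2η) + ηηᵀ`. The determinant of a rank-one update is
`det (A + uvᵀ) = det A + vᵀ adj(A) u`: expanding the determinant multilinearly in the rows
`Aᵢ + uᵢ v`, every term taking the `v`-part in two rows vanishes. For a diagonal `A` the
adjugate is diagonal with entries `∏_{j ≠ i} dⱼ`.
-/

open Finset

namespace Finset

theorem sum_finset_eq_empty_add_sum_singleton {α M : Type*} [Fintype α] [DecidableEq α]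
    [AddCommMonoid M] (f : Finset α → M) (hf : ∀ s : Finset α, 1 < #s → f s = 0) :
    ∑ s, f s = f ∅ + ∑ a, f {a} := by
  set small : Finset (Finset α) := insert ∅ (univ.map ⟨singleton, singleton_injective⟩)
  have h_small : ∀ s ∈ (univ : Finset (Finset α)), s ∉ small → f s = 0 := by
    intro s _ hs
    refine hf s (lt_of_not_ge fun hcard => hs ?_)
    rcases Nat.le_one_iff_eq_zero_or_eq_one.mp hcard with h | h
    · simp [small, card_eq_zero.mp h]
    · obtain ⟨a, rfl⟩ := card_eq_one.mp h
      simp [small]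
  rw [← sum_subset (subset_univ small) h_small, sum_insert (by simp), sum_map]
  rfl

end Finset

namespace Matrix

variable {n R : Type*} [Fintype n] [DecidableEq n] [CommRing R]

theorem det_of_add_smul_eq_sum_finset (r : n → n → R) (u v : n → R) :
    (of fun i => r i + u i • v).det
      = ∑ s : Finset n, (∏ i ∈ s, u i) * (of (s.piecewise (fun _ => v) r)).det := by
  have h_rows : (fun i => r i + u i • v) = (fun i => u i • v) + r := by
    ext i : 1; simp [add_comm]
  change detRowAlternating (fun i => r i + u i • v) = _
  rw [h_rows, detRowAlternating.map_add_univ]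
  refine sum_congr rfl fun s _ => ?_
  have : s.piecewise (fun i => u i • v) r
      = s.piecewise (fun i => u i • s.piecewise (fun _ => v) r i)
          (s.piecewise (fun _ => v) r) := by
    ext i : 1
    by_cases hi : i ∈ s <;> simp [hi]
  rw [this]
  exact detRowAlternating.toMultilinearMap.map_piecewise_smul _ _ s

theorem det_of_piecewise_const_eq_zero {s : Finset n} (hs : 1 < #s) (v : n → R)
    (r : n → n → R) :
    (of (s.piecewise (fun _ => v) r)).det = 0 := by
  obtain ⟨i, hi, j, hj, hij⟩ := one_lt_card.mp hs
  refine det_zero_of_row_eq hij ?_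
  change s.piecewise (fun _ => v) r i = s.piecewise (fun _ => v) r j
  rw [piecewise_eq_of_mem _ _ _ hi, piecewise_eq_of_mem _ _ _ hj]

theorem det_add_vecMulVec_eq_add_sum_updateRow (A : Matrix n n R) (u v : n → R) :
    (A + vecMulVec u v).det = A.det + ∑ i, u i * (A.updateRow i v).det := by
  obtain ⟨r, rfl⟩ := of.surjective A
  have h_rows : of r + vecMulVec u v = of fun i => r i + u i • v := by
    ext i j; simp [vecMulVec_apply]
  rw [h_rows, det_of_add_smul_eq_sum_finset, sum_finset_eq_empty_add_sum_singleton]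
  · simp only [piecewise_empty, prod_empty, one_mul, prod_singleton, piecewise_singleton]
    rfl
  · intro s hs
    rw [det_of_piecewise_const_eq_zero hs, mul_zero]

theorem det_add_vecMulVec (A : Matrix n n R) (u v : n → R) :
    (A + vecMulVec u v).det = A.det + v ⬝ᵥ (A.adjugate *ᵥ u) := by
  rw [← det_transpose, transpose_add, transpose_vecMulVec,
    det_add_vecMulVec_eq_add_sum_updateRow, det_transpose, ← cramer_eq_adjugate_mulVec,
    dotProduct]
  simp [cramer_apply, updateRow_transpose]

theorem det_diagonal_add_vecMulVec (d u v : n → R) :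
    (diagonal d + vecMulVec u v).det
      = ∏ i, d i + ∑ i, v i * u i * ∏ j ∈ univ.erase i, d j := by
  simp only [det_add_vecMulVec, det_diagonal, adjugate_diagonal, mulVec_diagonal, dotProduct]
  exact congrArg _ (sum_congr rfl fun i _ => by ring)

end Matrix

theorem det_eta_matrix_general (n : ℕ) (η : Fin n → ℝ) :
    (Matrix.of fun i j => if i = j then (η i - 1) ^ 2 else η i * η j).det
      = ∑ i, (η i) ^ 2 * ∏ j ∈ Finset.univ.erase i, (1 - 2 * η j)
        + ∏ j, (1 - 2 * η j) := by
  have h_split : (Matrix.of fun i j => if i = j then (η i - 1) ^ 2 else η i * η j)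
      = Matrix.diagonal (fun i => 1 - 2 * η i) + Matrix.vecMulVec η η := by
    ext i j
    by_cases h : i = j
    · subst h
      simp only [Matrix.of_apply, if_true, Matrix.add_apply, Matrix.diagonal_apply_eq,
        Matrix.vecMulVec_apply]
      ring
    · simp [h, Matrix.vecMulVec_apply]
  rw [h_split, Matrix.det_diagonal_add_vecMulVec, add_comm]
  simp only [sq]

/-- The determinant of the matrix with diagonal entries `(ηᵢ − 1)²` and
off-diagonal entries `ηᵢηⱼ` equals
`∑ᵢ ηᵢ² ∏_{j≠i} (1 − 2ηⱼ) + ∏ⱼ (1 − 2ηⱼ)`. -/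
theorem det_eta_matrix (n : ℕ) (hn : 1 ≤ n) (η : Fin n → ℝ) :
    (Matrix.of fun i j => if i = j then (η i - 1) ^ 2 else η i * η j).det
      = ∑ i, (η i) ^ 2 * ∏ j ∈ Finset.univ.erase i, (1 - 2 * η j)
        + ∏ j, (1 - 2 * η j) :=
  det_eta_matrix_general n η
end

section
/- Let n ≥ 1 and let η₁, …, ηₙ be real numbers. Let N(η) be the real n×n matrix with entries N₁₁ = η₁², N_{ii} = (ηᵢ − 1)² for 2 ≤ i ≤ n, and N_{ij} = ηᵢηⱼ for i ≠ j. Then det N(η) = η₁² Π_{j=2}^n (1 − 2ηⱼ). -/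
/-!
The matrix is `diagonal d + η ηᵀ` with `d₁ = 0` and `dᵢ = 1 - 2ηᵢ` for `i ≥ 2`, so its first row
is `η₁ ηᵀ`. Pulling out `η₁` and subtracting `ηᵢ` times the new first row `ηᵀ` from row `i` leaves
`diagonal d` with its first row replaced by `ηᵀ`, whose determinant is `η₁ ∏_{i ≥ 2} dᵢ` by
cofactor expansion along that row.
-/

open Finset

namespace Matrix

variable {ι R : Type*} [Fintype ι] [DecidableEq ι] [CommRing R]

theorem det_updateRow_diagonal (d w : ι → R) (k : ι) :
    (updateRow (diagonal d) k w).det = w k * ∏ i ∈ univ.erase k, d i := by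
  have hadj (j : ι) : adjugate (updateRow (diagonal d) k w) j k = adjugate (diagonal d) j k := by
    rw [adjugate_apply, adjugate_apply]
    congr 1
    ext i l
    by_cases hi : i = k <;> simp [updateRow_apply, hi]
  simp_rw [det_eq_sum_mul_adjugate_row _ k, hadj, adjugate_diagonal, diagonal_apply,
    updateRow_self, mul_ite, mul_zero, sum_ite_eq', mem_univ, if_true]

theorem det_updateRow_diagonal_add_vecMulVec (d u v : ι → R) (k : ι) :
    (updateRow (diagonal d + vecMulVec u v) k v).det = v k * ∏ i ∈ univ.erase k, d i := by
  rw [← det_updateRow_diagonal d v k]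
  refine det_eq_of_forall_row_eq_smul_add_const (Function.update u k 0) k (by simp) ?_
  intro i j
  rcases eq_or_ne i k with rfl | hik
  · simp
  · simp [hik, vecMulVec_apply]

theorem det_diagonal_add_vecMulVec_of_eq_zero {d : ι → R} {k : ι} (hk : d k = 0) (u v : ι → R) :
    (diagonal d + vecMulVec u v).det = u k * v k * ∏ i ∈ univ.erase k, d i := by
  have hrow : (diagonal d + vecMulVec u v) k = u k • v := by
    ext j
    simp [diagonal_apply, hk, vecMulVec_apply]
  rw [← updateRow_eq_self (diagonal d + vecMulVec u v) k, hrow, det_updateRow_smul,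
    det_updateRow_diagonal_add_vecMulVec, mul_assoc]

end Matrix

/-- The determinant of the matrix whose `(1,1)` entry is `η₁²`, whose other
diagonal entries are `(ηᵢ − 1)²`, and whose off-diagonal entries are `ηᵢηⱼ`, equals
`η₁² ∏_{j=2}^n (1 − 2ηⱼ)`. -/
theorem det_eta_matrix_first_row (n : ℕ) (hn : 0 < n) (η : Fin n → ℝ) :
    (Matrix.of fun i j =>
        if i = j then (if i = (⟨0, hn⟩ : Fin n) then (η i) ^ 2 else (η i - 1) ^ 2)
        else η i * η j).det
      = (η ⟨0, hn⟩) ^ 2 * ∏ j ∈ Finset.univ.erase (⟨0, hn⟩ : Fin n), (1 - 2 * η j) := by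
  set z : Fin n := ⟨0, hn⟩
  have hN : (Matrix.of fun i j =>
        if i = j then (if i = z then (η i) ^ 2 else (η i - 1) ^ 2) else η i * η j) =
      Matrix.diagonal (fun i => if i = z then 0 else 1 - 2 * η i) + Matrix.vecMulVec η η := by
    ext i j
    rcases eq_or_ne i j with rfl | hij
    · by_cases hi : i = z <;> simp [hi, Matrix.vecMulVec_apply] <;> ring
    · simp [hij, Matrix.vecMulVec_apply]
  rw [hN, Matrix.det_diagonal_add_vecMulVec_of_eq_zero (k := z) (by simp), sq]
  congr 1
  exact prod_congr rfl fun i hi => if_neg (ne_of_mem_erase hi)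
end

section
/- Let n ≥ 1 and define φ : ℝⁿ → ℝ by φ(η) = Σ_{i=1}^n ηᵢ² Π_{j ≠ i} (1 − 2ηⱼ) + Π_{j=1}^n (1 − 2ηⱼ). Then φ(η) ≥ 0 for every η in the set A = { η ∈ ℝⁿ : ηᵢ ≥ 0 for all i, and Σ_{i=1}^n ηᵢ ≤ 1 }. -/
open Finset

/-- The polynomial `φ(η) = ∑ᵢ ηᵢ² ∏_{j≠i} (1 − 2ηⱼ) + ∏ⱼ (1 − 2ηⱼ)`. -/
def phi (n : ℕ) (η : Fin n → ℝ) : ℝ :=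
  ∑ i, (η i) ^ 2 * ∏ j ∈ Finset.univ.erase i, (1 - 2 * η j)
    + ∏ j, (1 - 2 * η j)

/-- `φ ≥ 0` on the simplex `A = {η : ηᵢ ≥ 0, ∑ ηᵢ ≤ 1}`. -/
theorem phi_nonneg (n : ℕ) (hn : 1 ≤ n) (η : Fin n → ℝ)
    (hη : ∀ i, 0 ≤ η i) (hsum : ∑ i, η i ≤ 1) :
    0 ≤ phi n η := by
  by_cases hbig : ∃ k, 1/2 < η k
  · obtain ⟨k, hk⟩ := hbig
    have ha1 : η k ≤ 1 :=
      le_trans (Finset.single_le_sum (fun i _ => hη i) (mem_univ k)) hsum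
    set a := η k with ha
    set r : ℝ := ∑ i ∈ univ.erase k, η i with hr
    have hra : a + r ≤ 1 := by
      rw [hr, ha]
      rw [← Finset.add_sum_erase _ _ (mem_univ k)] at hsum
      exact hsum
    have hr0 : 0 ≤ r := Finset.sum_nonneg fun i _ => hη i
    have hηr : ∀ i ∈ univ.erase k, η i ≤ r := fun i hi =>
      Finset.single_le_sum (fun j _ => hη j) hi
    have hrhalf : r < 1/2 := by linarith
    have hpos : ∀ j ∈ univ.erase k, 0 < 1 - 2 * η j := fun j hj => by
      have := hηr j hj; linarith
    set P := ∏ j ∈ univ.erase k, (1 - 2 * η j) with hP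
    have hPpos : 0 < P := Finset.prod_pos hpos
    set R : Fin n → ℝ := fun i => ∏ j ∈ (univ.erase k).erase i, (1 - 2 * η j) with hR
    have hRpos : ∀ i, 0 < R i := fun i =>
      Finset.prod_pos fun j hj => hpos j (Finset.mem_of_mem_erase hj)
    have hRP : ∀ i ∈ univ.erase k, (1 - 2 * η i) * R i = P := fun i hi => by
      simp only [hR, hP]
      exact Finset.mul_prod_erase _ (fun j => 1 - 2 * η j) hi
    set T : ℝ := ∑ i ∈ univ.erase k, (η i) ^ 2 * R i with hT
    have hT0 : 0 ≤ T := Finset.sum_nonneg fun i _ =>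
      mul_nonneg (sq_nonneg _) (hRpos i).le
    -- decomposition of phi
    have hdecomp : phi n η = a ^ 2 * P + (1 - 2 * a) * T + (1 - 2 * a) * P := by
      rw [phi]
      have h1 : ∑ i, (η i) ^ 2 * ∏ j ∈ Finset.univ.erase i, (1 - 2 * η j)
          = a ^ 2 * P + ∑ i ∈ univ.erase k,
              (η i) ^ 2 * ∏ j ∈ Finset.univ.erase i, (1 - 2 * η j) := by
        rw [← Finset.add_sum_erase _ _ (mem_univ k)]
      have h2 : ∀ i ∈ univ.erase k,
          (η i) ^ 2 * ∏ j ∈ Finset.univ.erase i, (1 - 2 * η j)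
            = (1 - 2 * a) * ((η i) ^ 2 * R i) := by
        intro i hi
        have hik : i ≠ k := Finset.ne_of_mem_erase hi
        have hk' : k ∈ univ.erase i := Finset.mem_erase.2 ⟨hik.symm, mem_univ k⟩
        rw [← Finset.mul_prod_erase _ (fun j => 1 - 2 * η j) hk']
        simp only [hR, Finset.erase_right_comm]
        ring
      have h3 : ∏ j, (1 - 2 * η j) = (1 - 2 * a) * P :=
        (Finset.mul_prod_erase _ _ (mem_univ k)).symm
      rw [h1, Finset.sum_congr rfl h2, ← Finset.mul_sum, h3, ← hT]
    rw [hdecomp]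
    -- bound on T : (1 - 2r) * T ≤ r^2 * P
    have hTbound : (1 - 2 * r) * T ≤ r ^ 2 * P := by
      have step : (1 - 2 * r) * T ≤ (∑ i ∈ univ.erase k, (η i) ^ 2) * P := by
        rw [hT, Finset.mul_sum, Finset.sum_mul]
        refine Finset.sum_le_sum fun i hi => ?_
        have h1 : (1 - 2 * r) * R i ≤ P := by
          rw [← hRP i hi]
          have := hηr i hi
          nlinarith [hRpos i]
        calc (1 - 2 * r) * ((η i) ^ 2 * R i) = (η i) ^ 2 * ((1 - 2 * r) * R i) := by ring
          _ ≤ (η i) ^ 2 * P := by nlinarith [sq_nonneg (η i)]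
      have hsq : ∑ i ∈ univ.erase k, (η i) ^ 2 ≤ r ^ 2 := by
        rw [hr]
        exact Finset.sum_sq_le_sq_sum_of_nonneg fun i _ => hη i
      nlinarith
    nlinarith [mul_pos hPpos (by linarith : (0:ℝ) < 1 - 2 * r),
      mul_nonneg (mul_nonneg hPpos.le (by linarith : (0:ℝ) ≤ 2 * a - 1))
        (by nlinarith : (0:ℝ) ≤ (1 - a - r)),
      sq_nonneg (a + r - 1), sq_nonneg (a - 1), hT0,
      mul_nonneg hT0 (by linarith : (0:ℝ) ≤ 2 * a - 1)]
  · push_neg at hbig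
    have hfac : ∀ j : Fin n, 0 ≤ 1 - 2 * η j := fun j => by
      have := hbig j; linarith
    refine add_nonneg (Finset.sum_nonneg fun i _ => ?_)
      (Finset.prod_nonneg fun j _ => hfac j)
    exact mul_nonneg (sq_nonneg _) (Finset.prod_nonneg fun j _ => hfac j)
end

section
/- Let n ≥ 1 and let η₁, …, ηₙ be real numbers. For k = 1, …, n let S_k denote the k-th elementary symmetric polynomial of η₁, …, ηₙ, and define φ(η) = Σ_{i=1}^n ηᵢ² Π_{j ≠ i} (1 − 2ηⱼ) + Π_{j=1}^n (1 − 2ηⱼ). Then the identity φ(η) = (1 − S₁) · [ 1 + Σ_{k=1}^n (−1)ᵏ 2^{k−1} S_k ] + Σ_{k=3}^n (−1)^{k−1} (k−2) 2^{k−2} S_k holds for all η ∈ ℝⁿ. -/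
open Finset

/-- The `k`-th elementary symmetric polynomial of `η₁, …, ηₙ`. -/
def esym (n : ℕ) (η : Fin n → ℝ) (k : ℕ) : ℝ :=
  ∑ t ∈ Finset.univ.powersetCard k, ∏ i ∈ t, η i

/-!
Put `P(t) = ∏ⱼ (1 + t ηⱼ) = ∑ₖ Sₖ tᵏ`. Since `(1 − 2ηᵢ) ∏_{j≠i} (1 − 2ηⱼ) = P(−2)`, each term
`ηᵢ² ∏_{j≠i} (1 − 2ηⱼ)` is `(ηᵢ ∏_{j≠i} (1 − 2ηⱼ) − ηᵢ P(−2)) / 2`, and summing over `i` gives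
`2φ = (2 − S₁) P(−2) + P'(−2)`. Twice each of the two sums on the right-hand side is likewise a
combination of `P(−2) = ∑ₖ (−2)ᵏ Sₖ`, `P'(−2) = ∑ₖ k (−2)ᵏ⁻¹ Sₖ`, `S₀ = 1` and `S₁`, and the
identity becomes linear algebra.
-/

section GeneratingFunction

variable {ι R : Type*} [CommSemiring R]

theorem prod_one_add_mul_eq_sum_esymm (s : Finset ι) (f : ι → R) (t : R) :
    ∏ i ∈ s, (1 + t * f i)
      = ∑ k ∈ range (#s + 1), t ^ k * ∑ u ∈ s.powersetCard k, ∏ i ∈ u, f i := by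
  rw [prod_one_add, sum_powerset]
  refine sum_congr rfl fun k _ => ?_
  rw [mul_sum]
  refine sum_congr rfl fun u hu => ?_
  rw [prod_mul_distrib, prod_const, (mem_powersetCard.1 hu).2]

open Polynomial in
theorem sum_mul_prod_erase_one_add_mul_eq_sum_mul_esymm [DecidableEq ι] (s : Finset ι) (f : ι → R)
    (t : R) :
    ∑ i ∈ s, f i * ∏ j ∈ s.erase i, (1 + t * f j)
      = ∑ k ∈ range (#s + 1), k * t ^ (k - 1) * ∑ u ∈ s.powersetCard k, ∏ i ∈ u, f i := by
  have h := congrArg (fun p : R[X] => (derivative p).eval t)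
    (prod_one_add_mul_eq_sum_esymm s (C ∘ f) X)
  simp only [Function.comp_apply, ← map_prod, ← map_sum, derivative_prod_finset, derivative_add,
    derivative_one, derivative_mul, derivative_X, derivative_C, derivative_sum, derivative_X_pow,
    eval_finsetSum, eval_mul, eval_prod, eval_add, eval_one, eval_X, eval_C, eval_pow, mul_zero,
    add_zero, zero_add, one_mul] at h
  rw [← h]
  exact sum_congr rfl fun i _ => mul_comm _ _

theorem mul_sum_sq_mul_prod_erase_add [DecidableEq ι] (s : Finset ι) (f : ι → R) (t : R) :
    t * ∑ i ∈ s, f i ^ 2 * ∏ j ∈ s.erase i, (1 + t * f j)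
        + ∑ i ∈ s, f i * ∏ j ∈ s.erase i, (1 + t * f j)
      = (∑ i ∈ s, f i) * ∏ j ∈ s, (1 + t * f j) := by
  rw [mul_sum, ← sum_add_distrib, sum_mul]
  refine sum_congr rfl fun i hi => ?_
  rw [← mul_prod_erase s _ hi]
  ring

end GeneratingFunction

section AlternatingSums

variable {R : Type*} [CommRing R] (a : ℕ → R)

theorem two_mul_sum_Icc_one_eq_sum_range (n : ℕ) :
    2 * ∑ k ∈ Icc 1 n, (-1 : R) ^ k * 2 ^ (k - 1) * a k
      = ∑ k ∈ range (n + 1), (-2 : R) ^ k * a k - a 0 := by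
  induction n with
  | zero => simp
  | succ n ih =>
    rw [sum_Icc_succ_top (by omega), sum_range_succ, mul_add, ih, Nat.add_sub_cancel,
      neg_pow 2 (n + 1)]
    ring

theorem two_mul_sum_Icc_three_eq_sum_range {n : ℕ} (hn : 1 ≤ n) :
    2 * ∑ k ∈ Icc 3 n, (-1 : R) ^ (k - 1) * ((k : R) - 2) * 2 ^ (k - 2) * a k
      = ∑ k ∈ range (n + 1), k * (-2 : R) ^ (k - 1) * a k
        + ∑ k ∈ range (n + 1), (-2 : R) ^ k * a k - a 0 + a 1 := by
  induction n, hn using Nat.le_induction with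
  | base =>
    rw [Icc_eq_empty_of_lt (by norm_num)]
    simp only [sum_range_succ, sum_range_zero, sum_empty]
    ring
  | succ n hn ih =>
    obtain rfl | hn := hn.eq_or_lt
    · rw [Icc_eq_empty_of_lt (by norm_num)]
      simp only [sum_range_succ, sum_range_zero, sum_empty]
      ring
    obtain ⟨m, rfl⟩ := Nat.exists_eq_add_of_le' hn
    rw [sum_Icc_succ_top (by omega), mul_add, ih, sum_range_succ _ (m + 3),
      sum_range_succ _ (m + 3)]
    simp only [Nat.add_sub_cancel, show m + 2 + 1 - 2 = m + 1 by omega, neg_pow (2 : R)]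
    push_cast
    ring

end AlternatingSums

/-- The identity
`φ(η) = (1 − S₁)·[1 + ∑_{k=1}^n (−1)ᵏ 2^{k−1} S_k] + ∑_{k=3}^n (−1)^{k−1}(k−2) 2^{k−2} S_k`. -/
theorem phi_esym_identity (n : ℕ) (hn : 1 ≤ n) (η : Fin n → ℝ) :
    phi n η
      = (1 - esym n η 1)
          * (1 + ∑ k ∈ Finset.Icc 1 n, (-1 : ℝ) ^ k * 2 ^ (k - 1) * esym n η k)
        + ∑ k ∈ Finset.Icc 3 n, (-1 : ℝ) ^ (k - 1) * ((k : ℝ) - 2) * 2 ^ (k - 2) * esym n η k := by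
  have hS₀ : esym n η 0 = 1 := by simp [esym]
  have hS₁ : esym n η 1 = ∑ i, η i := by simp [esym, powersetCard_one]
  have hP := prod_one_add_mul_eq_sum_esymm univ η (-2)
  have hQ := sum_mul_prod_erase_one_add_mul_eq_sum_mul_esymm univ η (-2)
  simp only [← esym.eq_1, card_univ, Fintype.card_fin] at hP hQ
  have hsq := mul_sum_sq_mul_prod_erase_add univ η (-2)
  rw [hP, hQ, ← hS₁] at hsq
  have hI₁ := two_mul_sum_Icc_one_eq_sum_range (esym n η) n
  have hI₃ := two_mul_sum_Icc_three_eq_sum_range (esym n η) hn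
  rw [hS₀] at hI₁ hI₃
  rw [phi]
  simp only [sub_eq_add_neg (1 : ℝ), ← neg_mul]
  rw [hP]
  linear_combination (-1 / 2 : ℝ) * hsq - (1 - esym n η 1) / 2 * hI₁ - 1 / 2 * hI₃
end

section
/- Let n ≥ 2 and let η₁, …, ηₙ be nonnegative real numbers. For k = 1, …, n let S_k denote the k-th elementary symmetric polynomial of η₁, …, ηₙ. Then for every k with 1 ≤ k ≤ n − 1, the inequality S_{k+1} ≤ ((n − k)/(n(k+1))) · S_k · S₁ holds. -/
open Finset

lemma key_bij {n : ℕ} (m : ℕ) (F : Finset (Fin n) → Fin n → ℝ) :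
    ∑ A ∈ Finset.univ.powersetCard m, ∑ i ∈ Finset.univ \ A, F (insert i A) i
    = ∑ T ∈ Finset.univ.powersetCard (m + 1), ∑ i ∈ T, F T i := by
  rw [Finset.sum_sigma', Finset.sum_sigma']
  refine Finset.sum_bij' (fun p _ => (⟨insert p.2 p.1, p.2⟩ : Σ _ : Finset (Fin n), Fin n))
    (fun p _ => ⟨p.1.erase p.2, p.2⟩) ?_ ?_ ?_ ?_ ?_
  · rintro ⟨A, i⟩ hp
    simp only [mem_sigma, mem_powersetCard_univ, mem_sdiff, mem_univ, true_and] at hp ⊢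
    exact ⟨by rw [card_insert_of_notMem hp.2, hp.1], mem_insert_self _ _⟩
  · rintro ⟨T, i⟩ hp
    simp only [mem_sigma, mem_powersetCard_univ, mem_sdiff, mem_univ, true_and] at hp ⊢
    exact ⟨by rw [card_erase_of_mem hp.2, hp.1]; rfl, notMem_erase _ _⟩
  · rintro ⟨A, i⟩ hp
    simp only [mem_sigma, mem_powersetCard_univ, mem_sdiff, mem_univ, true_and] at hp
    simp [erase_insert hp.2]
  · rintro ⟨T, i⟩ hp
    simp only [mem_sigma, mem_powersetCard_univ, mem_sdiff, mem_univ, true_and] at hp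
    simp [insert_erase hp.2]
  · rintro ⟨A, i⟩ hp
    rfl

lemma cs_pairs {ι : Type*} [DecidableEq ι] (s : Finset ι) (f : ι → ℝ) :
    ∑ i ∈ s, ∑ j ∈ s.erase i, f i * f j ≤ ((s.card : ℝ) - 1) * ∑ i ∈ s, f i ^ 2 := by
  have h1 : ∑ i ∈ s, ∑ j ∈ s.erase i, f i * f j
      = (∑ i ∈ s, f i) ^ 2 - ∑ i ∈ s, f i ^ 2 := by
    have key : ∀ i ∈ s, ∑ j ∈ s.erase i, f i * f j = f i * ∑ j ∈ s, f j - f i ^ 2 := by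
      intro i hi
      rw [← Finset.mul_sum, ← Finset.sum_erase_add s f hi]; ring
    rw [Finset.sum_congr rfl key, Finset.sum_sub_distrib, ← Finset.sum_mul]; ring
  have h2 : (∑ i ∈ s, f i) ^ 2 ≤ (s.card : ℝ) * ∑ i ∈ s, f i ^ 2 :=
    sq_sum_le_card_mul_sum_sq
  have h3 : (0:ℝ) ≤ ∑ i ∈ s, f i ^ 2 := Finset.sum_nonneg fun i _ => sq_nonneg _
  nlinarith [h1, h2, h3]


/-- Iterated Newton inequality: for nonnegative `η₁,…,ηₙ` and
`1 ≤ k ≤ n − 1`, `S_{k+1} ≤ ((n−k)/(n(k+1))) S_k S₁`. -/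
theorem esym_newton_iterated (n : ℕ) (hn : 2 ≤ n) (η : Fin n → ℝ)
    (hη : ∀ i, 0 ≤ η i) (k : ℕ) (hk1 : 1 ≤ k) (hk2 : k ≤ n - 1) :
    esym n η (k + 1) ≤ ((n : ℝ) - k) / (n * (k + 1)) * (esym n η k * esym n η 1) := by
  obtain ⟨m, rfl⟩ : ∃ m, k = m + 1 := ⟨k - 1, (Nat.succ_pred_eq_of_pos hk1).symm⟩
  have hmn : m + 1 ≤ n - 1 := hk2
  have hmn' : m + 2 ≤ n := by omega
  set P : ℝ := ∑ T ∈ Finset.univ.powersetCard (m+1), ∑ i ∈ T, η i * ∏ j ∈ T, η j with hPdef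
  set Q : ℝ := ∑ T ∈ Finset.univ.powersetCard (m+1), ∑ i ∈ Finset.univ \ T, η i * ∏ j ∈ T, η j
    with hQdef
  set W : ℝ := ∑ A ∈ Finset.univ.powersetCard m, ∑ i ∈ Finset.univ \ A,
      ∑ j ∈ (Finset.univ \ A).erase i, η i * η j * ∏ l ∈ A, η l with hWdef
  -- S_k * S_1 = P + Q
  have hsplit : esym n η (m+1) * esym n η 1 = P + Q := by
    have h1 : esym n η 1 = ∑ i, η i := by
      simp [esym, Finset.powersetCard_one, Finset.sum_map]
    rw [h1, esym, Finset.sum_mul, hPdef, hQdef, ← Finset.sum_add_distrib]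
    refine Finset.sum_congr rfl fun T hT => ?_
    rw [← Finset.sum_sdiff (Finset.subset_univ T), mul_add, Finset.mul_sum, Finset.mul_sum,
      add_comm]
    congr 1 <;> exact Finset.sum_congr rfl fun i _ => mul_comm _ _
  -- Q = (m+2) * S_{m+2}
  have hQ : Q = ((m:ℝ) + 2) * esym n η (m + 1 + 1) := by
    have hkey := key_bij (m+1) (fun (U : Finset (Fin n)) (_ : Fin n) => ∏ j ∈ U, η j)
    have h1 : Q = ∑ A ∈ Finset.univ.powersetCard (m+1), ∑ i ∈ Finset.univ \ A,
        ∏ j ∈ insert i A, η j := by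
      rw [hQdef]
      refine Finset.sum_congr rfl fun T hT => Finset.sum_congr rfl fun i hi => ?_
      rw [Finset.prod_insert (Finset.mem_sdiff.mp hi).2]
    rw [h1, hkey, esym, Finset.mul_sum]
    refine Finset.sum_congr rfl fun U hU => ?_
    rw [Finset.sum_const, Finset.mem_powersetCard_univ.mp hU]
    push_cast
    ring
  -- P = sum of squares form
  have hP : P = ∑ A ∈ Finset.univ.powersetCard m, ∑ i ∈ Finset.univ \ A,
      η i ^ 2 * ∏ l ∈ A, η l := by
    rw [hPdef, ← key_bij m (fun T i => η i * ∏ j ∈ T, η j)]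
    refine Finset.sum_congr rfl fun A hA => Finset.sum_congr rfl fun i hi => ?_
    rw [Finset.prod_insert (Finset.mem_sdiff.mp hi).2]
    ring
  -- W = (m+1) * Q
  have hW : W = ((m:ℝ) + 1) * Q := by
    have hkey := key_bij m (fun (T : Finset (Fin n)) (i : Fin n) =>
      ∑ j ∈ Finset.univ \ T, η i * η j * ∏ l ∈ T.erase i, η l)
    have h1 : W = ∑ A ∈ Finset.univ.powersetCard m, ∑ i ∈ Finset.univ \ A,
        ∑ j ∈ Finset.univ \ insert i A, η i * η j * ∏ l ∈ (insert i A).erase i, η l := by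
      rw [hWdef]
      refine Finset.sum_congr rfl fun A hA => Finset.sum_congr rfl fun i hi => ?_
      rw [Finset.erase_insert (Finset.mem_sdiff.mp hi).2]
      have h2 : Finset.univ \ insert i A = (Finset.univ \ A).erase i := by
        ext x; simp [Finset.mem_erase, and_comm]
      rw [h2]
    rw [h1, hkey, hQdef, Finset.mul_sum]
    refine Finset.sum_congr rfl fun T hT => ?_
    have hcard : T.card = m + 1 := Finset.mem_powersetCard_univ.mp hT
    have h2 : ∀ i ∈ T, ∑ j ∈ Finset.univ \ T, η i * η j * ∏ l ∈ T.erase i, η l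
        = ∑ j ∈ Finset.univ \ T, η j * ∏ l ∈ T, η l := by
      intro i hi
      refine Finset.sum_congr rfl fun j _ => ?_
      rw [← Finset.mul_prod_erase T η hi]; ring
    rw [Finset.sum_congr rfl h2, Finset.sum_const, hcard, nsmul_eq_mul]
    push_cast
    rfl
  -- W ≤ (n - (m+1)) * P
  have hWP : W ≤ ((n:ℝ) - (m+1)) * P := by
    rw [hWdef, hP, Finset.mul_sum]
    refine Finset.sum_le_sum fun A hA => ?_
    have hcard : ((Finset.univ \ A).card : ℝ) - 1 = (n:ℝ) - (m+1) := by
      rw [Finset.card_sdiff_of_subset (Finset.subset_univ A), Finset.card_univ, Fintype.card_fin,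
        Finset.mem_powersetCard_univ.mp hA, Nat.cast_sub (by omega)]
      push_cast; ring
    have hprod : (0:ℝ) ≤ ∏ l ∈ A, η l := Finset.prod_nonneg fun l _ => hη l
    calc ∑ i ∈ Finset.univ \ A, ∑ j ∈ (Finset.univ \ A).erase i, η i * η j * ∏ l ∈ A, η l
        = (∑ i ∈ Finset.univ \ A, ∑ j ∈ (Finset.univ \ A).erase i, η i * η j) * ∏ l ∈ A, η l := by
          rw [Finset.sum_mul]
          exact Finset.sum_congr rfl fun i _ => (Finset.sum_mul _ _ _).symm
      _ ≤ (((Finset.univ \ A).card : ℝ) - 1) * (∑ i ∈ Finset.univ \ A, η i ^ 2) * ∏ l ∈ A, η l := by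
          exact mul_le_mul_of_nonneg_right (cs_pairs _ η) hprod
      _ = ((n:ℝ) - (m+1)) * ∑ i ∈ Finset.univ \ A, η i ^ 2 * ∏ l ∈ A, η l := by
          rw [hcard, mul_assoc, Finset.sum_mul]
  -- combine
  have hpos : (0:ℝ) < (n:ℝ) * ((m:ℝ) + 1 + 1) := by positivity
  rw [div_mul_eq_mul_div]
  push_cast
  rw [le_div_iff₀ hpos, hsplit]
  calc esym n η (m + 1 + 1) * ((n:ℝ) * ((m:ℝ) + 1 + 1))
      = ((n:ℝ) - ((m:ℝ)+1)) * Q + W := by rw [hW, hQ]; ring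
    _ ≤ ((n:ℝ) - ((m:ℝ)+1)) * Q + ((n:ℝ) - ((m:ℝ)+1)) * P := by linarith [hWP]
    _ = ((n:ℝ) - ((m:ℝ)+1)) * (P + Q) := by ring
end

section
/- Let n ≥ 1 and let η₁, …, ηₙ be nonnegative real numbers with Σ_{i=1}^n ηᵢ ≤ 1. For k = 1, …, n let S_k denote the k-th elementary symmetric polynomial of η₁, …, ηₙ. Then 1 + Σ_{k=1}^n (−1)ᵏ 2^{k−1} S_k ≥ 0. -/
open Finset

/-!
With `c = -2` the generating identity `∏ (1 + c ηᵢ) = ∑ₖ cᵏ Sₖ` shows that the left-hand side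
equals `(1 + ∏ (1 - 2ηᵢ)) / 2`. Since `∑ ηᵢ ≤ 1` forces every `ηᵢ ∈ [0, 1]`, each factor
`1 - 2ηᵢ` lies in `[-1, 1]`, so the product is at least `-1`.
-/

@[simp]
theorem esym_zero (n : ℕ) (η : Fin n → ℝ) : esym n η 0 = 1 := by
  simp [esym]

theorem prod_one_add_mul_eq_sum_esym (n : ℕ) (η : Fin n → ℝ) (c : ℝ) :
    ∏ i, (1 + c * η i) = ∑ k ∈ range (n + 1), c ^ k * esym n η k := by
  rw [prod_one_add, sum_powerset, card_univ, Fintype.card_fin]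
  refine sum_congr rfl fun k _ => ?_
  rw [esym, mul_sum]
  refine sum_congr rfl fun t ht => ?_
  rw [prod_mul_distrib, prod_const, (mem_powersetCard.mp ht).2]

theorem one_add_sum_alternating_esym (n : ℕ) (η : Fin n → ℝ) :
    1 + ∑ k ∈ Icc 1 n, (-1 : ℝ) ^ k * 2 ^ (k - 1) * esym n η k
      = (1 + ∏ i, (1 - 2 * η i)) / 2 := by
  have hprod := prod_one_add_mul_eq_sum_esym n η (-2)
  simp only [neg_mul, ← sub_eq_add_neg] at hprod
  rw [hprod, sum_range_succ', ← Ico_add_one_right_eq_Icc, sum_Ico_eq_sum_range,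
    add_tsub_cancel_right]
  have hterm (k : ℕ) : (-1 : ℝ) ^ (1 + k) * 2 ^ (1 + k - 1) * esym n η (1 + k)
      = (-2) ^ (k + 1) * esym n η (k + 1) / 2 := by
    rw [add_comm 1 k, add_tsub_cancel_right, neg_pow (2 : ℝ), pow_succ (2 : ℝ)]
    ring
  rw [esym_zero, pow_zero, one_mul]
  simp only [hterm, ← sum_div]
  ring

theorem neg_one_le_prod_of_abs_le_one {ι R : Type*} [CommRing R] [LinearOrder R]
    [IsStrictOrderedRing R] {s : Finset ι} {f : ι → R} (hf : ∀ i ∈ s, |f i| ≤ 1) :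
    -1 ≤ ∏ i ∈ s, f i :=
  (abs_le.mp ((abs_prod s f).trans_le (prod_le_one (fun _ _ => abs_nonneg _) hf))).1

theorem alternating_esym_sum_nonneg_general (n : ℕ) (η : Fin n → ℝ)
    (hη : ∀ i, 0 ≤ η i) (hsum : ∑ i, η i ≤ 1) :
    0 ≤ 1 + ∑ k ∈ Finset.Icc 1 n, (-1 : ℝ) ^ k * 2 ^ (k - 1) * esym n η k := by
  have hη_le_one (i : Fin n) : η i ≤ 1 :=
    (single_le_sum (fun j _ => hη j) (mem_univ i)).trans hsum
  have hprod : -1 ≤ ∏ i, (1 - 2 * η i) := neg_one_le_prod_of_abs_le_one fun i _ =>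
    abs_le.2 ⟨by linarith [hη_le_one i], by linarith [hη i]⟩
  rw [one_add_sum_alternating_esym]
  linarith

/-- For nonnegative `η₁,…,ηₙ` with `∑ ηᵢ ≤ 1`,
`1 + ∑_{k=1}^n (−1)ᵏ 2^{k−1} S_k ≥ 0`. -/
theorem alternating_esym_sum_nonneg (n : ℕ) (hn : 1 ≤ n) (η : Fin n → ℝ)
    (hη : ∀ i, 0 ≤ η i) (hsum : ∑ i, η i ≤ 1) :
    0 ≤ 1 + ∑ k ∈ Finset.Icc 1 n, (-1 : ℝ) ^ k * 2 ^ (k - 1) * esym n η k :=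
  alternating_esym_sum_nonneg_general n η hη hsum
end

section
/- Let n ≥ 1 and let η₁, …, ηₙ be real numbers. For k = 0, …, n let S_k denote the k-th elementary symmetric polynomial of η₁, …, ηₙ (with S₀ = 1), and set S_{n+1} = 0. For each i, let S_{k−1}^{(i)} denote the (k−1)-th elementary symmetric polynomial of the n−1 numbers obtained from η₁, …, ηₙ by removing ηᵢ. Then for every k with 1 ≤ k ≤ n, the identity S₁ · S_k = Σ_{i=1}^n ηᵢ² S_{k−1}^{(i)} + (k+1) S_{k+1} holds. -/
open Finset

/-- The `k`-th elementary symmetric polynomial of the `n − 1` numbers obtained from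
`η₁, …, ηₙ` by removing `ηᵢ`. -/
def esymErase (n : ℕ) (η : Fin n → ℝ) (i : Fin n) (k : ℕ) : ℝ :=
  ∑ t ∈ (Finset.univ.erase i).powersetCard k, ∏ j ∈ t, η j

/-- For `1 ≤ k ≤ n`,
`S₁ · S_k = ∑ᵢ ηᵢ² S_{k−1}^{(i)} + (k+1) S_{k+1}` (and `S_{n+1} = 0`). -/
theorem esym_mul_identity (n : ℕ) (hn : 1 ≤ n) (η : Fin n → ℝ)
    (k : ℕ) (hk1 : 1 ≤ k) (hk2 : k ≤ n) :
    esym n η 1 * esym n η k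
      = ∑ i, (η i) ^ 2 * esymErase n η i (k - 1) + ((k : ℝ) + 1) * esym n η (k + 1) := by
  classical
  have hS1 : esym n η 1 = ∑ i, η i := by
    unfold esym
    rw [Finset.powersetCard_one, Finset.sum_map]
    simp
  rw [hS1, Finset.sum_mul]
  have key : ∀ i : Fin n,
      η i * esym n η k
        = (η i) ^ 2 * esymErase n η i (k - 1)
          + ∑ t ∈ (Finset.univ.powersetCard k).filter (fun t => i ∉ t), η i * ∏ j ∈ t, η j := by
    intro i
    unfold esym esymErase
    rw [Finset.mul_sum,
      ← Finset.sum_filter_add_sum_filter_not (Finset.univ.powersetCard k) (fun t => i ∈ t)]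
    congr 1
    rw [Finset.mul_sum]
    refine Finset.sum_bij' (fun t _ => t.erase i) (fun s _ => insert i s) ?_ ?_ ?_ ?_ ?_
    · intro t ht
      simp only [Finset.mem_filter, Finset.mem_powersetCard] at ht ⊢
      refine ⟨fun j hj => ?_, ?_⟩
      · simp only [Finset.mem_erase] at hj ⊢
        exact ⟨hj.1, Finset.mem_univ _⟩
      · rw [Finset.card_erase_of_mem ht.2, ht.1.2]
    · intro s hs
      simp only [Finset.mem_powersetCard] at hs
      simp only [Finset.mem_filter, Finset.mem_powersetCard]
      have hi : i ∉ s := fun h => (Finset.mem_erase.1 (hs.1 h)).1 rfl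
      refine ⟨⟨Finset.subset_univ _, ?_⟩, Finset.mem_insert_self _ _⟩
      rw [Finset.card_insert_of_notMem hi, hs.2]
      omega
    · intro t ht
      simp only [Finset.mem_filter] at ht
      exact Finset.insert_erase ht.2
    · intro s hs
      simp only [Finset.mem_powersetCard] at hs
      have hi : i ∉ s := fun h => (Finset.mem_erase.1 (hs.1 h)).1 rfl
      exact Finset.erase_insert hi
    · intro t ht
      simp only [Finset.mem_filter] at ht
      rw [sq, mul_assoc, Finset.mul_prod_erase _ _ ht.2]
  simp only [key]
  rw [Finset.sum_add_distrib]
  congr 1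
  -- double counting
  have hrhs : ((k : ℝ) + 1) * esym n η (k + 1)
      = ∑ u ∈ Finset.univ.powersetCard (k + 1), ∑ i ∈ u, η i * ∏ j ∈ u.erase i, η j := by
    unfold esym
    rw [Finset.mul_sum]
    refine Finset.sum_congr rfl fun u hu => ?_
    simp only [Finset.mem_powersetCard] at hu
    have : ∀ i ∈ u, η i * ∏ j ∈ u.erase i, η j = ∏ j ∈ u, η j := fun i hi =>
      Finset.mul_prod_erase _ _ hi
    rw [Finset.sum_congr rfl this, Finset.sum_const, hu.2]
    push_cast
    ring
  rw [hrhs]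
  rw [← Finset.sum_sigma (Finset.univ : Finset (Fin n))
      (fun i => (Finset.univ.powersetCard k).filter (fun t => i ∉ t))
      (fun p => η p.1 * ∏ j ∈ p.2, η j),
    ← Finset.sum_sigma (Finset.univ.powersetCard (k + 1)) (fun u => u)
      (fun q => η q.2 * ∏ j ∈ q.1.erase q.2, η j)]
  refine Finset.sum_bij' (fun p _ => (⟨insert p.1 p.2, p.1⟩ : Σ _ : Finset (Fin n), Fin n))
    (fun q _ => (⟨q.2, q.1.erase q.2⟩ : Σ _ : Fin n, Finset (Fin n))) ?_ ?_ ?_ ?_ ?_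
  · rintro ⟨i, t⟩ hp
    simp only [Finset.mem_sigma, Finset.mem_filter, Finset.mem_powersetCard] at hp ⊢
    exact ⟨⟨Finset.subset_univ _, by rw [Finset.card_insert_of_notMem hp.2.2, hp.2.1.2]⟩,
      Finset.mem_insert_self _ _⟩
  · rintro ⟨u, i⟩ hq
    simp only [Finset.mem_sigma, Finset.mem_powersetCard, Finset.mem_filter] at hq ⊢
    refine ⟨Finset.mem_univ _, ⟨Finset.subset_univ _, ?_⟩, fun h => (Finset.mem_erase.1 h).1 rfl⟩
    rw [Finset.card_erase_of_mem hq.2, hq.1.2]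
    omega
  · rintro ⟨i, t⟩ hp
    simp only [Finset.mem_sigma, Finset.mem_filter] at hp
    simp [Finset.erase_insert hp.2.2]
  · rintro ⟨u, i⟩ hq
    simp only [Finset.mem_sigma] at hq
    simp [Finset.insert_erase hq.2]
  · rintro ⟨i, t⟩ hp
    simp only [Finset.mem_sigma, Finset.mem_filter] at hp
    simp [Finset.erase_insert hp.2.2]
end
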